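/- The Green functions are consistent across levels: for every n ≥ 1, every y ∈ V_n∖V₀ and every x ∈ V_n, one has G_{n+1}(x,y) = G_n(x,y). -/

import Mathlib

/-! A function harmonic on `Vₙ₊₁ ∖ Vₙ` satisfies `Δₙ₊₁ = 3 Δₙ` on `Vₙ`. On `V₁` this comes from
solving the three linear equations at the midpoints; it propagates to every level by
self-similarity, because `Eₙ₊₁` is the disjoint union of the copies `φᵢ(Eₙ)` and two cells meet
in a single vertex. Since the pole `y` lies in `Vₙ`, the restriction of `G_{n+1}(·, y)` to `Vₙ`
therefore solves the level-`n` Dirichlet problem, whose solution is unique: by the discrete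
Green identity `Σ_{x ∼ y} (u y - u x)² = -2 Σ_x u x Δu x` a solution of the homogeneous problem
is constant along edges, and `Vₙ` is connected. -/

open scoped Classical
open Real Set

noncomputable section

abbrev Pt : Type := ℝ × ℝ

/-- The three corners of the unit triangle. -/
def sierA : Fin 3 → Pt
  | 0 => (0, 0)
  | 1 => (1 / 2, Real.sqrt 3 / 2)
  | 2 => (1, 0)

/-- The three contractions `φᵢ(x) = (x + aᵢ)/2`. -/
def ctr (i : Fin 3) (x : Pt) : Pt :=
  ((x.1 + (sierA i).1) / 2, (x.2 + (sierA i).2) / 2)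

/-- The vertex sets `V n`. -/
def V : ℕ → Finset Pt
  | 0 => {sierA 0, sierA 1, sierA 2}
  | n + 1 => (V n).image (ctr 0) ∪ (V n).image (ctr 1) ∪ (V n).image (ctr 2)

/-- The (ordered) edge sets: `(x, y) ∈ Ed n` iff `{x,y} ∈ E_n`; each undirected
edge appears with both orientations. -/
def Ed : ℕ → Finset (Pt × Pt)
  | 0 => (V 0 ×ˢ V 0).filter fun p => p.1 ≠ p.2
  | n + 1 => Finset.univ.biUnion fun i : Fin 3 => (Ed n).image fun p => (ctr i p.1, ctr i p.2)

/-- `V* = ⋃ n, V n`. -/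
def Vstar : Set Pt := ⋃ n, (V n : Set Pt)

/-- The level-`n` energy `E_n(u,u) = (5/3)^n Σ_{{x,y} ∈ E_n} (u y - u x)²`
(each undirected edge counted once, whence the division by 2). -/
def En (n : ℕ) (u : Pt → ℝ) : ℝ :=
  (5 / 3 : ℝ) ^ n * (∑ p ∈ Ed n, (u p.2 - u p.1) ^ 2) / 2

/-- The discrete Laplacian `Δ_n u (x) = 5^n Σ_{y ∼ₙ x} (u y - u x)`. -/
def lap (n : ℕ) (u : Pt → ℝ) (x : Pt) : ℝ :=
  (5 : ℝ) ^ n * ∑ p ∈ (Ed n).filter (fun p => p.1 = x), (u p.2 - u p.1)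

/-- `g` is the level-`n` Green function with pole at `y`: it solves the
discrete Dirichlet problem `Δ_n g (y) = −3^n`, `Δ_n g (x) = 0` for
`x ∈ V_n ∖ (V₀ ∪ {y})`, and `g = 0` on `V₀ = {a₀,a₁,a₂}`. -/
def IsGreen (n : ℕ) (y : Pt) (g : Pt → ℝ) : Prop :=
  lap n g y = -(3 : ℝ) ^ n ∧
  (∀ x ∈ (V n : Set Pt), x ∉ (V 0 : Set Pt) → x ≠ y → lap n g x = 0) ∧
  ∀ i : Fin 3, g (sierA i) = 0

lemma sqrt_three_pos : 0 < √3 := Real.sqrt_pos.2 (by norm_num)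

def triangle : Set Pt := {p | 0 ≤ p.2 ∧ p.2 ≤ √3 * p.1 ∧ p.2 ≤ √3 * (1 - p.1)}

lemma sierA_mem_triangle (i : Fin 3) : sierA i ∈ triangle := by
  have := sqrt_three_pos
  fin_cases i <;> refine ⟨?_, ?_, ?_⟩ <;> simp [sierA] <;> linarith

lemma ctr_mem_triangle (i : Fin 3) {x : Pt} (hx : x ∈ triangle) : ctr i x ∈ triangle := by
  obtain ⟨h1, h2, h3⟩ := hx
  obtain ⟨g1, g2, g3⟩ := sierA_mem_triangle i
  refine ⟨?_, ?_, ?_⟩ <;> simp only [ctr] <;> linarith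

lemma eq_sierA_of_ctr_eq_ctr {i j : Fin 3} (hij : i ≠ j) {z w : Pt} (hz : z ∈ triangle)
    (hw : w ∈ triangle) (h : ctr i z = ctr j w) : z = sierA j ∧ w = sierA i := by
  have hs := sqrt_three_pos
  obtain ⟨z1, z2, z3⟩ := hz
  obtain ⟨w1, w2, w3⟩ := hw
  simp only [ctr, Prod.ext_iff] at h ⊢
  fin_cases i <;> fin_cases j <;> simp [sierA] at h hij ⊢ <;>
    obtain ⟨h1, h2⟩ := h <;> refine ⟨⟨?_, ?_⟩, ?_, ?_⟩ <;> nlinarith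

lemma ctr_injective (i : Fin 3) : Function.Injective (ctr i) := by
  intro a b h
  simp only [ctr, Prod.mk.injEq] at h
  exact Prod.ext (by linarith [h.1]) (by linarith [h.2])

def ctrInv (i : Fin 3) (x : Pt) : Pt := (2 * x.1 - (sierA i).1, 2 * x.2 - (sierA i).2)

lemma ctrInv_ctr (i : Fin 3) (z : Pt) : ctrInv i (ctr i z) = z := by
  ext <;> simp only [ctrInv, ctr] <;> ring

lemma ctr_ctrInv (i : Fin 3) (x : Pt) : ctr i (ctrInv i x) = x := by
  ext <;> simp only [ctrInv, ctr] <;> ring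

lemma ctr_sierA_self (i : Fin 3) : ctr i (sierA i) = sierA i := by
  simp only [ctr, add_self_div_two]

lemma ctr_sierA_comm (i j : Fin 3) : ctr i (sierA j) = ctr j (sierA i) := by
  simp only [ctr, add_comm]

lemma sierA_injective : Function.Injective sierA := by
  intro i j h
  have := sqrt_three_pos
  fin_cases i <;> fin_cases j <;> first | rfl | norm_num [sierA, Prod.ext_iff] at h

lemma mem_V_zero {x : Pt} : x ∈ V 0 ↔ ∃ i, sierA i = x := by
  simp [V, Fin.exists_fin_succ, eq_comm]

lemma mem_V_succ {n : ℕ} {x : Pt} : x ∈ V (n + 1) ↔ ∃ i, ∃ z ∈ V n, ctr i z = x := by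
  simp [V, Fin.exists_fin_succ]

lemma sierA_mem_V (n : ℕ) (i : Fin 3) : sierA i ∈ V n := by
  induction n with
  | zero => exact mem_V_zero.2 ⟨i, rfl⟩
  | succ n ih => exact mem_V_succ.2 ⟨i, sierA i, ih, ctr_sierA_self i⟩

lemma V_zero_subset (n : ℕ) : V 0 ⊆ V n := by
  intro x hx
  obtain ⟨i, rfl⟩ := mem_V_zero.1 hx
  exact sierA_mem_V n i

lemma V_subset_V_succ (n : ℕ) : V n ⊆ V (n + 1) := by
  induction n with
  | zero => exact V_zero_subset 1
  | succ n ih =>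
    intro x hx
    obtain ⟨i, z, hz, rfl⟩ := mem_V_succ.1 hx
    exact mem_V_succ.2 ⟨i, z, ih hz, rfl⟩

lemma mem_triangle_of_mem_V {n : ℕ} {x : Pt} (hx : x ∈ V n) : x ∈ triangle := by
  induction n generalizing x with
  | zero =>
    obtain ⟨i, rfl⟩ := mem_V_zero.1 hx
    exact sierA_mem_triangle i
  | succ n ih =>
    obtain ⟨i, z, hz, rfl⟩ := mem_V_succ.1 hx
    exact ctr_mem_triangle i (ih hz)

lemma ctrInv_mem_V_of_mem_V_succ {n : ℕ} {i : Fin 3} {x : Pt} (hx : x ∈ V (n + 1))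
    (h : ctrInv i x ∈ V (n + 1)) : ctrInv i x ∈ V n := by
  obtain ⟨j, w, hw, rfl⟩ := mem_V_succ.1 hx
  by_cases hij : i = j
  · rwa [hij, ctrInv_ctr]
  · obtain ⟨h1, -⟩ := eq_sierA_of_ctr_eq_ctr hij (mem_triangle_of_mem_V h)
      (mem_triangle_of_mem_V hw) (ctr_ctrInv i (ctr j w))
    exact h1 ▸ sierA_mem_V n j

lemma Ed_succ (n : ℕ) :
    Ed (n + 1) =
      Finset.univ.biUnion fun i : Fin 3 => (Ed n).image fun p => (ctr i p.1, ctr i p.2) :=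
  rfl

lemma mem_V_of_mem_Ed {n : ℕ} {p : Pt × Pt} (hp : p ∈ Ed n) : p.1 ∈ V n ∧ p.2 ∈ V n := by
  induction n generalizing p with
  | zero => exact Finset.mem_product.1 (Finset.mem_filter.1 hp).1
  | succ n ih =>
    simp only [Ed_succ, Finset.mem_biUnion, Finset.mem_image] at hp
    obtain ⟨i, -, q, hq, rfl⟩ := hp
    exact ⟨mem_V_succ.2 ⟨i, _, (ih hq).1, rfl⟩, mem_V_succ.2 ⟨i, _, (ih hq).2, rfl⟩⟩

lemma fst_ne_snd_of_mem_Ed {n : ℕ} {p : Pt × Pt} (hp : p ∈ Ed n) : p.1 ≠ p.2 := by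
  induction n generalizing p with
  | zero => exact (Finset.mem_filter.1 hp).2
  | succ n ih =>
    simp only [Ed_succ, Finset.mem_biUnion, Finset.mem_image] at hp
    obtain ⟨i, -, q, hq, rfl⟩ := hp
    exact fun h => ih hq (ctr_injective i h)

lemma swap_mem_Ed {n : ℕ} {p : Pt × Pt} (hp : p ∈ Ed n) : p.swap ∈ Ed n := by
  induction n generalizing p with
  | zero =>
    obtain ⟨hp, hne⟩ := Finset.mem_filter.1 hp
    exact Finset.mem_filter.2 ⟨Finset.mem_product.2 (Finset.mem_product.1 hp).symm, hne.symm⟩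
  | succ n ih =>
    simp only [Ed_succ, Finset.mem_biUnion, Finset.mem_image] at hp ⊢
    obtain ⟨i, -, q, hq, rfl⟩ := hp
    exact ⟨i, Finset.mem_univ i, q.swap, ih hq, rfl⟩

lemma mk_sierA_mem_Ed_zero {i j : Fin 3} (hij : i ≠ j) : (sierA i, sierA j) ∈ Ed 0 :=
  Finset.mem_filter.2 ⟨Finset.mem_product.2 ⟨sierA_mem_V 0 i, sierA_mem_V 0 j⟩,
    sierA_injective.ne hij⟩

lemma mk_ctr_mem_Ed_succ {n : ℕ} {p : Pt × Pt} (hp : p ∈ Ed n) (i : Fin 3) :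
    (ctr i p.1, ctr i p.2) ∈ Ed (n + 1) :=
  Finset.mem_biUnion.2 ⟨i, Finset.mem_univ i, Finset.mem_image_of_mem _ hp⟩

lemma disjoint_image_Ed {i j : Fin 3} (hij : i ≠ j) (n : ℕ) :
    Disjoint ((Ed n).image fun p => (ctr i p.1, ctr i p.2))
      ((Ed n).image fun p => (ctr j p.1, ctr j p.2)) := by
  simp only [Finset.disjoint_left, Finset.mem_image]
  rintro _ ⟨p, hp, rfl⟩ ⟨q, hq, hpq⟩
  simp only [Prod.mk.injEq] at hpq
  obtain ⟨h1, -⟩ := eq_sierA_of_ctr_eq_ctr hij (mem_triangle_of_mem_V (mem_V_of_mem_Ed hp).1)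
    (mem_triangle_of_mem_V (mem_V_of_mem_Ed hq).1) hpq.1.symm
  obtain ⟨h2, -⟩ := eq_sierA_of_ctr_eq_ctr hij (mem_triangle_of_mem_V (mem_V_of_mem_Ed hp).2)
    (mem_triangle_of_mem_V (mem_V_of_mem_Ed hq).2) hpq.2.symm
  exact fst_ne_snd_of_mem_Ed hp (h1.trans h2.symm)

def rawLap (n : ℕ) (u : Pt → ℝ) (x : Pt) : ℝ :=
  ∑ p ∈ (Ed n).filter (fun p => p.1 = x), (u p.2 - u p.1)

lemma lap_eq_mul_rawLap (n : ℕ) (u : Pt → ℝ) (x : Pt) : lap n u x = 5 ^ n * rawLap n u x :=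
  rfl

lemma lap_eq_zero_iff {n : ℕ} {u : Pt → ℝ} {x : Pt} : lap n u x = 0 ↔ rawLap n u x = 0 := by
  rw [lap_eq_mul_rawLap, mul_eq_zero, or_iff_right (by positivity)]

lemma rawLap_of_notMem {n : ℕ} {x : Pt} (hx : x ∉ V n) (u : Pt → ℝ) : rawLap n u x = 0 := by
  refine Finset.sum_eq_zero fun p hp => absurd ?_ hx
  obtain ⟨hp, hpx⟩ := Finset.mem_filter.1 hp
  exact hpx ▸ (mem_V_of_mem_Ed hp).1

lemma lap_sub (n : ℕ) (f g : Pt → ℝ) (x : Pt) : lap n (f - g) x = lap n f x - lap n g x := by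
  simp only [lap, ← mul_sub, ← Finset.sum_sub_distrib, Pi.sub_apply]
  exact congrArg _ (Finset.sum_congr rfl fun p _ => by ring)

lemma rawLap_zero_sierA (u : Pt → ℝ) (i : Fin 3) :
    rawLap 0 u (sierA i) = ∑ j, (u (sierA j) - u (sierA i)) := by
  have hV : V 0 = Finset.univ.image sierA := by
    ext x; simp [mem_V_zero]
  calc rawLap 0 u (sierA i)
      = ∑ p ∈ (V 0 ×ˢ V 0).filter (fun p => p.1 = sierA i), (u p.2 - u p.1) := by
        rw [rawLap, Ed, Finset.filter_comm]
        refine Finset.sum_filter_of_ne fun p _ hne h => hne ?_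
        rw [h, sub_self]
    _ = ∑ q ∈ V 0, (u q - u (sierA i)) := by
        rw [Finset.filter_product_left (· = sierA i), Finset.filter_eq' _ _,
          if_pos (sierA_mem_V 0 i), Finset.sum_product, Finset.sum_singleton]
    _ = ∑ j, (u (sierA j) - u (sierA i)) := by
        rw [hV, Finset.sum_image fun j _ k _ h => sierA_injective h]

/-- `Eₙ₊₁` is the disjoint union of the three copies `φᵢ(Eₙ)`. -/
lemma rawLap_succ (n : ℕ) (v : Pt → ℝ) (x : Pt) :
    rawLap (n + 1) v x = ∑ i, rawLap n (v ∘ ctr i) (ctrInv i x) := by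
  rw [rawLap, Ed_succ, Finset.filter_biUnion, Finset.sum_biUnion
    fun i _ j _ hij => (disjoint_image_Ed hij n).mono (Finset.filter_subset _ _)
      (Finset.filter_subset _ _)]
  refine Finset.sum_congr rfl fun i _ => ?_
  have hinj : Function.Injective fun p : Pt × Pt => (ctr i p.1, ctr i p.2) :=
    fun p q h =>
      Prod.ext (ctr_injective i (congrArg Prod.fst h)) (ctr_injective i (congrArg Prod.snd h))
  rw [Finset.filter_image, Finset.sum_image fun p _ q _ h => hinj h]
  refine Finset.sum_congr (Finset.filter_congr fun p _ => ?_) fun p _ => rfl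
  constructor
  · rintro rfl; exact (ctrInv_ctr i p.1).symm
  · rintro h; rw [h, ctr_ctrInv]

lemma ctr_sierA_notMem_V_zero {i k : Fin 3} (hik : i ≠ k) : ctr i (sierA k) ∉ V 0 := by
  intro h
  obtain ⟨l, hl⟩ := mem_V_zero.1 h
  by_cases hli : l = i
  · subst hli
    rw [← ctr_sierA_self l] at hl
    exact hik (sierA_injective (ctr_injective l hl))
  · exact hli (sierA_injective (eq_sierA_of_ctr_eq_ctr hli (sierA_mem_triangle l)
      (sierA_mem_triangle k) ((ctr_sierA_self l).trans hl)).1)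

lemma mem_V_of_ctr_mem_V_succ {n : ℕ} {i : Fin 3} {z : Pt} (hz : z ∈ V (n + 1))
    (h : ctr i z ∈ V (n + 1)) : z ∈ V n := by
  have := ctrInv_mem_V_of_mem_V_succ h (by rwa [ctrInv_ctr])
  rwa [ctrInv_ctr] at this

lemma rawLap_ctrInv_ctr_of_ne {n : ℕ} {i j : Fin 3} (hji : j ≠ i) {z : Pt} (hz : z ∈ triangle)
    (hzj : z ≠ sierA j) (u : Pt → ℝ) : rawLap n u (ctrInv j (ctr i z)) = 0 :=
  rawLap_of_notMem (fun hw => hzj (eq_sierA_of_ctr_eq_ctr hji (mem_triangle_of_mem_V hw) hz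
    (ctr_ctrInv j _)).2) u

lemma rawLap_succ_ctr {n : ℕ} {i : Fin 3} {z : Pt} (hz : z ∈ triangle)
    (hzj : ∀ j ≠ i, z ≠ sierA j) (v : Pt → ℝ) :
    rawLap (n + 1) v (ctr i z) = rawLap n (v ∘ ctr i) z := by
  rw [rawLap_succ, Fintype.sum_eq_single i fun j hji =>
    rawLap_ctrInv_ctr_of_ne hji hz (hzj j hji) _, ctrInv_ctr]

lemma rawLap_succ_ctr_sierA {n : ℕ} {i k : Fin 3} (hik : i ≠ k) (v : Pt → ℝ) :
    rawLap (n + 1) v (ctr i (sierA k)) =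
      rawLap n (v ∘ ctr i) (sierA k) + rawLap n (v ∘ ctr k) (sierA i) := by
  rw [rawLap_succ, Fintype.sum_eq_add i k hik fun j hj => rawLap_ctrInv_ctr_of_ne hj.1
    (sierA_mem_triangle k) (sierA_injective.ne hj.2).symm _, ctrInv_ctr, ctr_sierA_comm i k,
    ctrInv_ctr]

lemma rawLap_one_sierA_of_harmonic (v : Pt → ℝ)
    (hv : ∀ i k, i ≠ k → rawLap 1 v (ctr i (sierA k)) = 0) (i : Fin 3) :
    rawLap 1 v (sierA i) = 3 / 5 * rawLap 0 v (sierA i) := by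
  have hcorner : rawLap 1 v (sierA i) = ∑ j, (v (ctr i (sierA j)) - v (sierA i)) := by
    conv_lhs => rw [← ctr_sierA_self i]
    rw [rawLap_succ_ctr (sierA_mem_triangle i) fun j hji => sierA_injective.ne hji.symm,
      rawLap_zero_sierA]
    simp only [Function.comp_apply, ctr_sierA_self]
  have hmid : ∀ i k, i ≠ k → ∑ j, (v (ctr i (sierA j)) - v (ctr i (sierA k))) +
      ∑ j, (v (ctr k (sierA j)) - v (ctr k (sierA i))) = 0 := by
    intro i k hik
    rw [← hv i k hik, rawLap_succ_ctr_sierA hik, rawLap_zero_sierA, rawLap_zero_sierA]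
    rfl
  have h01 := hmid 0 1 (by decide)
  have h02 := hmid 0 2 (by decide)
  have h12 := hmid 1 2 (by decide)
  obtain rfl | rfl | rfl : i = 0 ∨ i = 1 ∨ i = 2 := by fin_cases i <;> simp
  all_goals
    simp only [hcorner, rawLap_zero_sierA, Fin.sum_univ_three, ctr_sierA_self, ctr_sierA_comm 1 0,
      ctr_sierA_comm 2 0, ctr_sierA_comm 2 1] at h01 h02 h12 ⊢
    linarith

lemma rawLap_succ_of_harmonic (n : ℕ) (v : Pt → ℝ)
    (hv : ∀ x ∈ V (n + 1), x ∉ V n → rawLap (n + 1) v x = 0) :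
    ∀ x ∈ V n, rawLap (n + 1) v x = 3 / 5 * rawLap n v x := by
  induction n generalizing v with
  | zero =>
    intro x hx
    obtain ⟨i, rfl⟩ := mem_V_zero.1 hx
    exact rawLap_one_sierA_of_harmonic v (fun i k hik => hv _
      (mem_V_succ.2 ⟨i, _, sierA_mem_V 0 k, rfl⟩) (ctr_sierA_notMem_V_zero hik)) i
  | succ n ih =>
    intro x hx
    have hcell : ∀ i, rawLap (n + 1) (v ∘ ctr i) (ctrInv i x) =
        3 / 5 * rawLap n (v ∘ ctr i) (ctrInv i x) := by
      intro i
      by_cases hw : ctrInv i x ∈ V (n + 1)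
      · refine ih (v ∘ ctr i) (fun z hz hzn => ?_) _ (ctrInv_mem_V_of_mem_V_succ hx hw)
        rw [← rawLap_succ_ctr (mem_triangle_of_mem_V hz) fun j _ h => hzn (h ▸ sierA_mem_V n j)]
        exact hv _ (mem_V_succ.2 ⟨i, z, hz, rfl⟩) fun h => hzn (mem_V_of_ctr_mem_V_succ hz h)
      · rw [rawLap_of_notMem hw, rawLap_of_notMem fun h => hw (V_subset_V_succ n h), mul_zero]
    rw [rawLap_succ, rawLap_succ n, Finset.mul_sum]
    exact Finset.sum_congr rfl fun i _ => hcell i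

lemma lap_succ_of_harmonic (n : ℕ) (v : Pt → ℝ)
    (hv : ∀ x ∈ V (n + 1), x ∉ V n → lap (n + 1) v x = 0) :
    ∀ x ∈ V n, lap (n + 1) v x = 3 * lap n v x := by
  intro x hx
  rw [lap_eq_mul_rawLap, lap_eq_mul_rawLap, rawLap_succ_of_harmonic n v
    (fun z hz hzn => lap_eq_zero_iff.1 (hv z hz hzn)) x hx, pow_succ]
  ring

lemma sum_Ed_swap (n : ℕ) (f : Pt × Pt → ℝ) : ∑ p ∈ Ed n, f p.swap = ∑ p ∈ Ed n, f p :=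
  Finset.sum_nbij' Prod.swap Prod.swap (fun _ hp => swap_mem_Ed hp) (fun _ hp => swap_mem_Ed hp)
    (fun _ _ => rfl) (fun _ _ => rfl) (fun _ _ => rfl)

lemma sum_V_mul_rawLap (n : ℕ) (u : Pt → ℝ) :
    ∑ x ∈ V n, u x * rawLap n u x = ∑ p ∈ Ed n, u p.1 * (u p.2 - u p.1) := by
  rw [← Finset.sum_fiberwise_of_maps_to fun p hp => (mem_V_of_mem_Ed hp).1]
  refine Finset.sum_congr rfl fun x _ => ?_
  rw [rawLap, Finset.mul_sum]
  exact Finset.sum_congr rfl fun p hp => by rw [(Finset.mem_filter.1 hp).2]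

lemma sum_Ed_sq (n : ℕ) (u : Pt → ℝ) :
    ∑ p ∈ Ed n, (u p.2 - u p.1) ^ 2 = -2 * ∑ x ∈ V n, u x * rawLap n u x := by
  have hswap : ∑ p ∈ Ed n, u p.2 * (u p.2 - u p.1) = -∑ p ∈ Ed n, u p.1 * (u p.2 - u p.1) := by
    rw [← sum_Ed_swap n fun p => u p.1 * (u p.2 - u p.1), ← Finset.sum_neg_distrib]
    refine Finset.sum_congr rfl fun p _ => ?_
    simp only [Prod.fst_swap, Prod.snd_swap]
    ring
  calc ∑ p ∈ Ed n, (u p.2 - u p.1) ^ 2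
      = ∑ p ∈ Ed n, u p.2 * (u p.2 - u p.1) - ∑ p ∈ Ed n, u p.1 * (u p.2 - u p.1) := by
        rw [← Finset.sum_sub_distrib]
        exact Finset.sum_congr rfl fun p _ => by ring
    _ = -2 * ∑ x ∈ V n, u x * rawLap n u x := by
        rw [hswap, sum_V_mul_rawLap]
        ring

lemma eq_sierA_zero_of_forall_mem_Ed {n : ℕ} {u : Pt → ℝ} (h : ∀ p ∈ Ed n, u p.2 = u p.1) :
    ∀ x ∈ V n, u x = u (sierA 0) := by
  induction n generalizing u with
  | zero =>
    intro x hx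
    obtain ⟨i, rfl⟩ := mem_V_zero.1 hx
    by_cases hi : i = 0
    · rw [hi]
    · exact h _ (mk_sierA_mem_Ed_zero (Ne.symm hi))
  | succ n ih =>
    have hcell : ∀ i, ∀ z ∈ V n, u (ctr i z) = u (ctr i (sierA 0)) :=
      fun i => ih fun p hp => h _ (mk_ctr_mem_Ed_succ hp i)
    intro x hx
    obtain ⟨i, z, hz, rfl⟩ := mem_V_succ.1 hx
    rw [hcell i z hz, ctr_sierA_comm i 0, hcell 0 _ (sierA_mem_V n i), ctr_sierA_self]

lemma eq_zero_of_harmonic {n : ℕ} {u : Pt → ℝ} (hb : ∀ i, u (sierA i) = 0)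
    (hu : ∀ x ∈ V n, x ∉ V 0 → lap n u x = 0) : ∀ x ∈ V n, u x = 0 := by
  have hsum : ∑ x ∈ V n, u x * rawLap n u x = 0 := by
    refine Finset.sum_eq_zero fun x hx => ?_
    by_cases hx0 : x ∈ V 0
    · obtain ⟨i, rfl⟩ := mem_V_zero.1 hx0
      rw [hb, zero_mul]
    · rw [lap_eq_zero_iff.1 (hu x hx hx0), mul_zero]
  have hedge : ∀ p ∈ Ed n, u p.2 = u p.1 := by
    intro p hp
    have hsq := (Finset.sum_eq_zero_iff_of_nonneg fun p _ => sq_nonneg (u p.2 - u p.1)).1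
      (by rw [sum_Ed_sq, hsum, mul_zero]) p hp
    exact sub_eq_zero.1 (pow_eq_zero_iff two_ne_zero |>.1 hsq)
  intro x hx
  rw [eq_sierA_zero_of_forall_mem_Ed hedge x hx, hb 0]

theorem green_consistent_general (n : ℕ)
    (y : Pt) (hy : y ∈ (V n : Set Pt))
    (g g' : Pt → ℝ) (hg : IsGreen n y g) (hg' : IsGreen (n + 1) y g') :
    ∀ x ∈ (V n : Set Pt), g' x = g x := by
  obtain ⟨hgy, hg_harm, hg_bdry⟩ := hg
  obtain ⟨hg'y, hg'_harm, hg'_bdry⟩ := hg'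
  have hrenorm : ∀ x ∈ V n, lap (n + 1) g' x = 3 * lap n g' x :=
    lap_succ_of_harmonic n g' fun x hx hxn =>
      hg'_harm x hx (fun h => hxn (V_zero_subset n h)) fun h => hxn (h ▸ hy)
  have hdiff : ∀ x ∈ V n, x ∉ V 0 → lap n (g' - g) x = 0 := by
    intro x hx hx0
    rw [lap_sub, sub_eq_zero]
    have h3 := hrenorm x hx
    by_cases hxy : x = y
    · subst hxy
      rw [hg'y, pow_succ] at h3
      linarith
    · rw [hg'_harm x (V_subset_V_succ n hx) hx0 hxy] at h3
      rw [hg_harm x hx hx0 hxy]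
      linarith
  intro x hx
  exact sub_eq_zero.1 (eq_zero_of_harmonic (fun i => by simp [hg_bdry, hg'_bdry]) hdiff x hx)

/-- Consistency of the Green functions across levels: for `y ∈ V_n ∖ V₀`,
the level-`(n+1)` Green function with pole at `y` agrees with the level-`n`
one on `V_n`. -/
theorem green_consistent (n : ℕ) (hn : 1 ≤ n)
    (y : Pt) (hy : y ∈ (V n : Set Pt)) (hy0 : y ∉ (V 0 : Set Pt))
    (g g' : Pt → ℝ) (hg : IsGreen n y g) (hg' : IsGreen (n + 1) y g') :
    ∀ x ∈ (V n : Set Pt), g' x = g x :=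
  green_consistent_general n y hy g g' hg hg'

end
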